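/- Let G be a finitely generated infinite group, let H ≤ G be a subgroup of finite index, let d be a Banach metric on G, and let d_H be the restriction of d to H × H. Then d_H is a Banach metric on H. -/

import Mathlib

open Filter Topology

section Defs

variable {G : Type*}

/-- `d` is a metric on `X` (nonnegative, vanishing exactly on the diagonal,
symmetric, triangle inequality). -/
def IsMetric {X : Type*} (d : X → X → ℝ) : Prop :=
  (∀ x y, 0 ≤ d x y) ∧ (∀ x y, d x y = 0 ↔ x = y) ∧ (∀ x y, d x y = d y x) ∧
    (∀ x y z, d x z ≤ d x y + d y z)

/-- The Busemann function of `x` with base point `1`: `b_x(y) = d(x,y) - d(x,1)`. -/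
def bus [Group G] (d : G → G → ℝ) (x y : G) : ℝ := d x y - d x 1

/-- `h` belongs to the metric-functional boundary `∂(G,d)`: it is a pointwise
limit of Busemann functions and is not itself a Busemann function. -/
def InBoundary [Group G] (d : G → G → ℝ) (h : G → ℝ) : Prop :=
  (∃ u : ℕ → G, ∀ y : G, Tendsto (fun n => bus d (u n) y) atTop (𝓝 (h y))) ∧
    ∀ x : G, h ≠ bus d x

/-- The action of `x ∈ G` on functions: `(x.h)(y) = h(x⁻¹y) - h(x⁻¹)`. -/
def act [Group G] (x : G) (h : G → ℝ) : G → ℝ := fun y => h (x⁻¹ * y) - h x⁻¹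

/-- `S` is a finite symmetric generating set of `G`. -/
def FinSymGen [Group G] (S : Set G) : Prop :=
  S.Finite ∧ (∀ s ∈ S, s⁻¹ ∈ S) ∧ Subgroup.closure S = ⊤

/-- The word length of `x` with respect to `S`: the least `n` such that `x`
is a product of `n` elements of `S`. -/
noncomputable def wordLength [Group G] (S : Set G) (x : G) : ℕ :=
  sInf {n : ℕ | ∃ l : List G, (∀ s ∈ l, s ∈ S) ∧ l.length = n ∧ l.prod = x}

/-- The word metric with respect to `S` : `d_S(x,y) = |x⁻¹y|_S`. -/
noncomputable def wordDist [Group G] (S : Set G) (x y : G) : ℝ :=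
  (wordLength S (x⁻¹ * y) : ℝ)

/-- `(G,d)` is quasi-isometric to a Cayley graph of `G`. -/
def QIToCayley [Group G] (d : G → G → ℝ) : Prop :=
  ∃ S : Set G, FinSymGen S ∧ ∃ φ : G → G, ∃ C : ℝ, 0 < C ∧
    (∀ y : G, ∃ x : G, wordDist S (φ x) y ≤ C) ∧
    ∀ x y : G, C⁻¹ * d x y - C ≤ wordDist S (φ x) (φ y) ∧
      wordDist S (φ x) (φ y) ≤ C * d x y + C

/-- A Banach metric on `G`: an integer-valued, left-invariant, proper metric,
quasi-isometric to a Cayley graph, all of whose metric functionals are unbounded. -/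
def IsBanachMetric [Group G] (d : G → G → ℝ) : Prop :=
  IsMetric d ∧
  (∀ x y : G, ∃ n : ℕ, d x y = n) ∧
  (∀ x y z : G, d (z * x) (z * y) = d x y) ∧
  (∀ r : ℝ, {x : G | d x 1 ≤ r}.Finite) ∧
  QIToCayley d ∧
  ∀ h : G → ℝ, InBoundary d h → ¬ ∃ B : ℝ, ∀ x : G, |h x| ≤ B

/-- A virtual homomorphism on `G`: a function `φ : G → ℤ` restricting to a
nontrivial homomorphism on some finite index subgroup. -/
def IsVirtualHom [Group G] (φ : G → ℤ) : Prop :=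
  ∃ H : Subgroup G, H.FiniteIndex ∧
    (∀ a b : G, a ∈ H → b ∈ H → φ (a * b) = φ a + φ b) ∧
    ∃ a ∈ H, φ a ≠ 0

end Defs

/-! A finite index subgroup `H` is `R`-dense in `(G, d)` for some `R`. The quasi-isometry to a
Cayley graph makes `(G, d)` coarsely geodesic, and pushing coarse paths to nearby points of `H`
shows that `H` is coarsely geodesic as well; so the `d`-ball of a suitable radius in `H` is a
finite generating set whose word metric is bi-Lipschitz to `d`. For a metric functional `h` of
`H`, a subsequence of the Busemann functions defining it converges on all of `G` to some `h'`
(Tychonoff; `G` is countable as `d` is proper). Either `h'` is a Busemann function of `G`, which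
is unbounded on the infinite set `H`, or `h'` is a metric functional of `G`, hence unbounded,
and being `1`-Lipschitz it stays unbounded on the `R`-dense set `H`. -/

open Function

namespace IsMetric

variable {X : Type*} {d : X → X → ℝ}

theorem nonneg (hd : IsMetric d) (x y : X) : 0 ≤ d x y := hd.1 x y

theorem self_eq_zero (hd : IsMetric d) (x : X) : d x x = 0 := (hd.2.1 x x).2 rfl

theorem comm (hd : IsMetric d) (x y : X) : d x y = d y x := hd.2.2.1 x y

theorem triangle (hd : IsMetric d) (x y z : X) : d x z ≤ d x y + d y z := hd.2.2.2 x y z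

theorem comp_injective {Y : Type*} (hd : IsMetric d) {f : Y → X} (hf : Injective f) :
    IsMetric fun a b => d (f a) (f b) :=
  ⟨fun _ _ => hd.nonneg _ _, fun _ _ => (hd.2.1 _ _).trans hf.eq_iff, fun _ _ => hd.comm _ _,
    fun _ _ _ => hd.triangle _ _ _⟩

end IsMetric

theorem countable_of_finite_balls {X : Type*} {d : X → X → ℝ} (x₀ : X)
    (hfin : ∀ r, {x | d x x₀ ≤ r}.Finite) : Countable X := by
  rw [← Set.countable_univ_iff, ← Set.iUnion_eq_univ_iff.2 fun x => exists_nat_ge (d x x₀)]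
  exact Set.countable_iUnion fun n : ℕ => (hfin n).countable

section LeftInvariant

variable {G : Type*} [Group G] {d : G → G → ℝ}

theorem dist_inv_mul_one (hd : IsMetric d) (hinv : ∀ x y z : G, d (z * x) (z * y) = d x y)
    (x y : G) : d (x⁻¹ * y) 1 = d x y := by
  rw [← inv_mul_cancel x, hinv, hd.comm]

theorem dist_inv_one (hd : IsMetric d) (hinv : ∀ x y z : G, d (z * x) (z * y) = d x y) (x : G) :
    d x⁻¹ 1 = d x 1 := by
  simpa using dist_inv_mul_one hd hinv x 1

theorem exists_dist_coe_le_of_finiteIndex (hinv : ∀ x y z : G, d (z * x) (z * y) = d x y)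
    (H : Subgroup G) [H.FiniteIndex] : ∃ R, ∀ g : G, ∃ y : H, d g y ≤ R := by
  obtain ⟨R, hR⟩ := (Set.finite_range fun q : G ⧸ H => d 1 q.out).bddAbove
  refine ⟨R, fun g => ?_⟩
  set t := (QuotientGroup.mk g⁻¹ : G ⧸ H).out
  have ht : g * t ∈ H := by
    simpa using QuotientGroup.eq.1 (QuotientGroup.out_eq' (QuotientGroup.mk g⁻¹ : G ⧸ H)).symm
  refine ⟨⟨g * t, ht⟩, ?_⟩
  calc d g (g * t) = d 1 t := by simpa using hinv 1 t g
    _ ≤ R := hR ⟨_, rfl⟩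

end LeftInvariant

theorem Subgroup.infinite_of_finiteIndex {G : Type*} [Group G] [Infinite G] (H : Subgroup G)
    [H.FiniteIndex] : Infinite H := by
  have hcard := H.index_mul_card
  rw [Nat.card_eq_zero_of_infinite (α := G), mul_eq_zero] at hcard
  rcases hcard with hindex | hcard
  · exact absurd hindex Subgroup.FiniteIndex.index_ne_zero
  · exact (Nat.card_eq_zero.1 hcard).resolve_left (not_isEmpty_of_nonempty H)

inductive CoarsePath {X : Type*} (d : X → X → ℝ) (c : ℝ) : ℕ → X → X → Prop
  | refl (x : X) : CoarsePath d c 0 x x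
  | cons {m : ℕ} {x y z : X} : d x y ≤ c → CoarsePath d c m y z → CoarsePath d c (m + 1) x z

def CoarselyGeodesic {X : Type*} (d : X → X → ℝ) (c K : ℝ) : Prop :=
  ∀ x y, ∃ m : ℕ, (m : ℝ) ≤ K * d x y + K ∧ CoarsePath d c m x y

namespace CoarsePath

variable {X Y : Type*} {d : X → X → ℝ} {c : ℝ} {m k : ℕ} {x y z : X}

theorem trans (h₁ : CoarsePath d c m x y) (h₂ : CoarsePath d c k y z) :
    CoarsePath d c (m + k) x z := by
  induction h₁ with
  | refl => simpa using h₂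
  | cons hxy _ ih => rw [Nat.add_right_comm]; exact cons hxy (ih h₂)

theorem snoc (h : CoarsePath d c m x y) (hyz : d y z ≤ c) : CoarsePath d c (m + 1) x z :=
  h.trans (cons hyz (refl z))

theorem map {d' : Y → Y → ℝ} {c' : ℝ} {f : X → Y} (hf : ∀ a b, d a b ≤ c → d' (f a) (f b) ≤ c')
    (h : CoarsePath d c m x y) : CoarsePath d' c' m (f x) (f y) := by
  induction h with
  | refl x => exact refl (f x)
  | cons hxy _ ih => exact cons (hf _ _ hxy) ih

theorem dist_le (hd : IsMetric d) (h : CoarsePath d c m x y) : d x y ≤ c * m := by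
  induction h with
  | refl x => simp [hd.self_eq_zero]
  | @cons m x y z hxy _ ih =>
    push_cast
    linarith [hd.triangle x y z]

theorem exists_list_prod_eq {G : Type*} [Group G] {d : G → G → ℝ} {x y : G}
    (hd : IsMetric d) (hinv : ∀ x y z : G, d (z * x) (z * y) = d x y) (h : CoarsePath d c m x y) :
    ∃ l : List G, (∀ s ∈ l, d s 1 ≤ c) ∧ l.length = m ∧ l.prod = x⁻¹ * y := by
  induction h with
  | refl x => exact ⟨[], by simp, rfl, by simp⟩
  | @cons m x y z hxy _ ih =>
    obtain ⟨l, hl, hlen, hprod⟩ := ih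
    refine ⟨(x⁻¹ * y) :: l, ?_, by simp [hlen], by simp [hprod, mul_assoc]⟩
    simpa [dist_inv_mul_one hd hinv, hxy] using hl

end CoarsePath

theorem coarsePath_mul_prod {G : Type*} [Group G] {d : G → G → ℝ} {c : ℝ} {S : Set G}
    (hS : ∀ a, ∀ s ∈ S, d a (a * s) ≤ c) {l : List G} (hl : ∀ s ∈ l, s ∈ S) (a : G) :
    CoarsePath d c l.length a (a * l.prod) := by
  induction l generalizing a with
  | nil => simpa using CoarsePath.refl a
  | cons s t ih =>
    simp only [List.forall_mem_cons] at hl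
    simpa [mul_assoc] using CoarsePath.cons (hS a s hl.1) (ih hl.2 (a * s))

section WordLength

variable {G : Type*} [Group G] {S : Set G}

theorem wordLength_prod_le {l : List G} (hl : ∀ s ∈ l, s ∈ S) : wordLength S l.prod ≤ l.length :=
  Nat.sInf_le ⟨l, hl, rfl, rfl⟩

theorem wordLength_one : wordLength S 1 = 0 :=
  Nat.le_zero.1 (wordLength_prod_le (l := []) (by simp))

theorem exists_list_length_eq_wordLength (hsym : ∀ s ∈ S, s⁻¹ ∈ S)
    (hgen : Subgroup.closure S = ⊤) (x : G) :
    ∃ l : List G, (∀ s ∈ l, s ∈ S) ∧ l.prod = x ∧ l.length = wordLength S x := by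
  have hx : x ∈ Submonoid.closure S := by
    have hS : S ∪ S⁻¹ = S := Set.union_eq_left.2 fun s hs => by simpa using hsym _ hs
    rw [← hS, ← Subgroup.closure_toSubmonoid, hgen]
    trivial
  obtain ⟨l, hl, rfl⟩ := Submonoid.exists_list_of_mem_closure hx
  obtain ⟨l', hl', hlen, hprod⟩ := Nat.sInf_mem (s := {n | ∃ l' : List G,
    (∀ s ∈ l', s ∈ S) ∧ l'.length = n ∧ l'.prod = l.prod}) ⟨l.length, l, hl, rfl, rfl⟩
  exact ⟨l', hl', hprod, hlen⟩

theorem wordLength_mul_le (hsym : ∀ s ∈ S, s⁻¹ ∈ S) (hgen : Subgroup.closure S = ⊤) (x y : G) :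
    wordLength S (x * y) ≤ wordLength S x + wordLength S y := by
  obtain ⟨lx, hlx, rfl, hx⟩ := exists_list_length_eq_wordLength hsym hgen x
  obtain ⟨ly, hly, rfl, hy⟩ := exists_list_length_eq_wordLength hsym hgen y
  rw [← hx, ← hy, ← List.length_append, ← List.prod_append]
  exact wordLength_prod_le fun s hs => (List.mem_append.1 hs).elim (hlx s) (hly s)

theorem wordLength_inv_le (hsym : ∀ s ∈ S, s⁻¹ ∈ S) (hgen : Subgroup.closure S = ⊤) (x : G) :
    wordLength S x⁻¹ ≤ wordLength S x := by
  obtain ⟨l, hl, rfl, hlen⟩ := exists_list_length_eq_wordLength hsym hgen x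
  rw [← hlen, List.prod_inv_reverse, ← List.length_map (f := fun s : G => s⁻¹),
    ← List.length_reverse]
  exact wordLength_prod_le fun s hs => by
    obtain ⟨t, ht, rfl⟩ := List.mem_map.1 (List.mem_reverse.1 hs)
    exact hsym t (hl t ht)

theorem wordDist_comm (hsym : ∀ s ∈ S, s⁻¹ ∈ S) (hgen : Subgroup.closure S = ⊤) (x y : G) :
    wordDist S x y = wordDist S y x := by
  have h₁ := wordLength_inv_le hsym hgen (x⁻¹ * y)
  have h₂ := wordLength_inv_le hsym hgen (y⁻¹ * x)
  simp only [mul_inv_rev, inv_inv] at h₁ h₂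
  rw [wordDist, wordDist, le_antisymm h₂ h₁]

theorem wordDist_triangle (hsym : ∀ s ∈ S, s⁻¹ ∈ S) (hgen : Subgroup.closure S = ⊤) (x y z : G) :
    wordDist S x z ≤ wordDist S x y + wordDist S y z := by
  have h := wordLength_mul_le hsym hgen (x⁻¹ * y) (y⁻¹ * z)
  rw [mul_assoc, mul_inv_cancel_left] at h
  unfold wordDist
  exact_mod_cast h

theorem coarsePath_wordDist (hsym : ∀ s ∈ S, s⁻¹ ∈ S) (hgen : Subgroup.closure S = ⊤)
    (x y : G) : CoarsePath (wordDist S) 1 (wordLength S (x⁻¹ * y)) x y := by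
  obtain ⟨l, hl, hprod, hlen⟩ := exists_list_length_eq_wordLength hsym hgen (x⁻¹ * y)
  have hstep : ∀ a, ∀ s ∈ S, wordDist S a (a * s) ≤ 1 := fun a s hs => by
    simpa [wordDist] using wordLength_prod_le (l := [s]) (by simpa using hs)
  simpa [hlen, hprod] using coarsePath_mul_prod hstep hl x

end WordLength

theorem QIToCayley.coarselyGeodesic {G : Type*} [Group G] {d : G → G → ℝ} (hd : IsMetric d)
    (hqi : QIToCayley d) : ∃ c K, 0 ≤ c ∧ CoarselyGeodesic d c K := by
  obtain ⟨S, ⟨-, hsym, hgen⟩, φ, C, hC, hsurj, hqi⟩ := hqi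
  -- `z` is a coarse inverse of `φ`: it carries a word path from `φ x` to `φ y` back to `G`.
  choose z hz using hsurj
  have hd_le : ∀ a b, d a b ≤ C * (wordDist S (φ a) (φ b) + C) := fun a b =>
    (inv_mul_le_iff₀ hC).1 (by linarith [(hqi a b).1])
  have hend : ∀ a, d a (z (φ a)) ≤ C * (3 * C + 1) := fun a => by
    have := hz (φ a)
    rw [← wordDist_comm hsym hgen] at this
    calc d a (z (φ a)) ≤ C * (C + C) := (hd_le _ _).trans (by gcongr)
      _ ≤ C * (3 * C + 1) := by nlinarith
  have hstep : ∀ a b, wordDist S a b ≤ 1 → d (z a) (z b) ≤ C * (3 * C + 1) := fun a b hab => by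
    have h₁ := wordDist_triangle hsym hgen (φ (z a)) a (φ (z b))
    have h₂ := wordDist_triangle hsym hgen a b (φ (z b))
    have h₃ := wordDist_comm hsym hgen b (φ (z b))
    calc d (z a) (z b) ≤ C * ((2 * C + 1) + C) :=
          (hd_le _ _).trans (by gcongr; linarith [hz a, hz b])
      _ = C * (3 * C + 1) := by ring
  refine ⟨C * (3 * C + 1), C + 2, by positivity, fun x y =>
    ⟨wordLength S ((φ x)⁻¹ * φ y) + 2, ?_, ?_⟩⟩
  · have hn : (wordLength S ((φ x)⁻¹ * φ y) : ℝ) ≤ C * d x y + C := (hqi x y).2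
    push_cast
    nlinarith [hd.nonneg x y]
  · refine (CoarsePath.cons (hend x) ((coarsePath_wordDist hsym hgen _ _).map hstep)).snoc ?_
    rw [hd.comm]
    exact hend y

theorem CoarselyGeodesic.comp {X Y : Type*} {d : X → X → ℝ} {c K R : ℝ} (hd : IsMetric d)
    (hc : 0 ≤ c) (hg : CoarselyGeodesic d c K) (ι : Y → X) (hR : ∀ x, ∃ y, d x (ι y) ≤ R) :
    CoarselyGeodesic (fun a b => d (ι a) (ι b)) (c + 2 * R) (K + 2) := by
  choose ρ hρ using hR
  intro a b
  obtain ⟨m, hm, hpath⟩ := hg (ι a) (ι b)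
  have hR₀ : 0 ≤ R := (hd.nonneg _ _).trans (hρ (ι a))
  have hstep : ∀ p q, d p q ≤ c → d (ι (ρ p)) (ι (ρ q)) ≤ c + 2 * R := fun p q hpq => by
    linarith [hd.triangle (ι (ρ p)) p (ι (ρ q)), hd.triangle p q (ι (ρ q)), hd.comm (ι (ρ p)) p,
      hρ p, hρ q]
  refine ⟨m + 2, by push_cast; nlinarith [hd.nonneg (ι a) (ι b)],
    (CoarsePath.cons ?_ (hpath.map (f := ρ) hstep)).snoc ?_⟩
  · linarith [hρ (ι a)]
  · linarith [hρ (ι b), hd.comm (ι (ρ (ι b))) (ι b)]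

theorem qiToCayley_of_coarselyGeodesic {G : Type*} [Group G] {d : G → G → ℝ} {c K : ℝ}
    (hd : IsMetric d) (hinv : ∀ x y z : G, d (z * x) (z * y) = d x y)
    (hfin : {x | d x 1 ≤ c}.Finite) (hg : CoarselyGeodesic d c K) : QIToCayley d := by
  set S := {x | d x 1 ≤ c}
  have hsym : ∀ s ∈ S, s⁻¹ ∈ S := fun s hs => by
    simpa [S, dist_inv_one hd hinv] using hs
  have hgen : Subgroup.closure S = ⊤ := by
    refine (Subgroup.eq_top_iff' _).2 fun x => ?_
    obtain ⟨m, -, hpath⟩ := hg 1 x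
    obtain ⟨l, hl, -, hprod⟩ := hpath.exists_list_prod_eq hd hinv
    rw [inv_one, one_mul] at hprod
    exact hprod ▸ Subgroup.list_prod_mem _ fun s hs => Subgroup.subset_closure (hl s hs)
  have hword : ∀ x y, (wordLength S (x⁻¹ * y) : ℝ) ≤ K * d x y + K := fun x y => by
    obtain ⟨m, hm, hpath⟩ := hg x y
    obtain ⟨l, hl, rfl, hprod⟩ := hpath.exists_list_prod_eq hd hinv
    exact (Nat.cast_le.2 (hprod ▸ wordLength_prod_le hl)).trans hm
  have hdist : ∀ x y, d x y ≤ c * wordLength S (x⁻¹ * y) := fun x y => by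
    obtain ⟨l, hl, hprod, hlen⟩ := exists_list_length_eq_wordLength hsym hgen (x⁻¹ * y)
    have hS : ∀ a, ∀ s ∈ S, d a (a * s) ≤ c := fun a s hs => by
      simpa using (hinv 1 s a).trans_le ((hd.comm 1 s).trans_le hs)
    simpa [hprod, hlen] using (coarsePath_mul_prod hS hl x).dist_le hd
  set C := max (max K c) 1
  have hC : 0 < C := lt_max_of_lt_right one_pos
  have hKC : K ≤ C := (le_max_left _ _).trans (le_max_left _ _)
  have hcC : c ≤ C := (le_max_right _ _).trans (le_max_left _ _)
  refine ⟨S, ⟨hfin, hsym, hgen⟩, id, C, hC, fun y => ⟨y, by simp [wordDist, wordLength_one, hC.le]⟩,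
    fun x y => ⟨?_, ?_⟩⟩
  · have hw : (0 : ℝ) ≤ wordLength S (x⁻¹ * y) := Nat.cast_nonneg _
    have : C⁻¹ * d x y ≤ wordLength S (x⁻¹ * y) :=
      (inv_mul_le_iff₀ hC).2 ((hdist x y).trans (by gcongr))
    simp only [wordDist, id]
    linarith
  · have := hword x y
    simp only [wordDist, id]
    nlinarith [hd.nonneg x y]

theorem unbounded_comp_of_dense {X Y : Type*} {d : X → X → ℝ} {f : X → ℝ} {R : ℝ}
    (hf : ∀ a b, |f a - f b| ≤ d a b) (hf_unbdd : ¬ ∃ B, ∀ x, |f x| ≤ B) (ι : Y → X)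
    (hR : ∀ x, ∃ y, d x (ι y) ≤ R) : ¬ ∃ B, ∀ y, |f (ι y)| ≤ B := by
  rintro ⟨B, hB⟩
  refine hf_unbdd ⟨B + R, fun x => ?_⟩
  obtain ⟨y, hy⟩ := hR x
  linarith [abs_sub_abs_le_abs_sub (f x) (f (ι y)), hf x (ι y), hB y]

theorem exists_lt_dist_of_injective {X Y : Type*} [Infinite Y] {d : X → X → ℝ} {x₀ : X}
    (hfin : ∀ r, {x | d x x₀ ≤ r}.Finite) {ι : Y → X} (hι : Injective ι) (r : ℝ) :
    ∃ y, r < d (ι y) x₀ := by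
  obtain ⟨y, hy⟩ := ((hfin r).preimage hι.injOn).exists_notMem
  exact ⟨y, not_le.1 hy⟩

section Busemann

variable {G : Type*} [Group G] {d : G → G → ℝ}

theorem abs_bus_sub_bus_le (hd : IsMetric d) (x a b : G) :
    |bus d x a - bus d x b| ≤ d a b := by
  rw [abs_le]
  unfold bus
  constructor <;> linarith [hd.triangle x a b, hd.triangle x b a, hd.comm a b]

theorem abs_bus_le (hd : IsMetric d) (x y : G) : |bus d x y| ≤ d y 1 := by
  simpa [bus] using abs_bus_sub_bus_le hd x y 1

theorem abs_sub_le_of_tendsto_bus (hd : IsMetric d) {u : ℕ → G} {h : G → ℝ}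
    (hu : ∀ y, Tendsto (fun n => bus d (u n) y) atTop (𝓝 (h y))) (a b : G) :
    |h a - h b| ≤ d a b :=
  le_of_tendsto ((hu a).sub (hu b)).abs (Eventually.of_forall fun _ => abs_bus_sub_bus_le hd _ a b)

theorem exists_subseq_tendsto_bus [Countable G] (hd : IsMetric d) (u : ℕ → G) :
    ∃ (h : G → ℝ) (ψ : ℕ → ℕ), StrictMono ψ ∧
      ∀ y, Tendsto (fun n => bus d (u (ψ n)) y) atTop (𝓝 (h y)) := by
  obtain ⟨h, -, ψ, hψ, hlim⟩ :=
    (isCompact_univ_pi fun y : G => isCompact_Icc (a := -d y 1) (b := d y 1)).tendsto_subseq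
      (x := fun n y => bus d (u n) y) fun n y _ => abs_le.1 (abs_bus_le hd _ _)
  exact ⟨h, ψ, hψ, tendsto_pi_nhds.1 hlim⟩

theorem bus_comp_unbounded {Y : Type*} [Infinite Y] (hd : IsMetric d)
    (hfin : ∀ r, {x | d x 1 ≤ r}.Finite) {ι : Y → G} (hι : Injective ι) (x : G) :
    ¬ ∃ B, ∀ y, |bus d x (ι y)| ≤ B := by
  rintro ⟨B, hB⟩
  obtain ⟨y, hy⟩ := exists_lt_dist_of_injective hfin hι (B + 2 * d x 1)
  have := (le_abs_self _).trans (hB y)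
  unfold bus at this
  linarith [hd.triangle (ι y) x 1, hd.comm (ι y) x]

theorem unbounded_of_inBoundary_restrict (hd : IsMetric d) (hfin : ∀ r, {x | d x 1 ≤ r}.Finite)
    (hbdry : ∀ h, InBoundary d h → ¬ ∃ B, ∀ x, |h x| ≤ B) (H : Subgroup G) [Infinite H] {R : ℝ}
    (hR : ∀ g, ∃ y : H, d g y ≤ R) (h : H → ℝ) (hh : InBoundary (fun x y : H => d x y) h) :
    ¬ ∃ B, ∀ y, |h y| ≤ B := by
  have : Countable G := countable_of_finite_balls 1 hfin
  obtain ⟨⟨u, hu⟩, -⟩ := hh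
  obtain ⟨h', ψ, hψ, hlim⟩ := exists_subseq_tendsto_bus hd fun n => (u n : G)
  have hrestrict : h = fun y : H => h' y :=
    funext fun y => tendsto_nhds_unique ((hu y).comp hψ.tendsto_atTop) (hlim y)
  subst hrestrict
  by_cases hbus : ∃ x, h' = bus d x
  · obtain ⟨x, rfl⟩ := hbus
    exact bus_comp_unbounded hd hfin Subtype.val_injective x
  · exact unbounded_comp_of_dense (abs_sub_le_of_tendsto_bus hd hlim)
      (hbdry h' ⟨⟨_, hlim⟩, not_exists.1 hbus⟩) Subtype.val hR

end Busemann

theorem isBanachMetric_restrict_finiteIndex_general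
    {G : Type*} [Group G] [Infinite G]
    (H : Subgroup G) (hH : H.FiniteIndex)
    (d : G → G → ℝ) (hd : IsBanachMetric d) :
    IsBanachMetric (fun x y : H => d (x : G) (y : G)) := by
  obtain ⟨hmet, hint, hinv, hfin, hqi, hbdry⟩ := hd
  have hmetH := hmet.comp_injective (Subtype.val_injective (p := (· ∈ H)))
  have hinvH : ∀ x y z : H, d (z * x : H) (z * y : H) = d x y := fun x y z => hinv x y z
  have hfinH : ∀ r, {x : H | d x (1 : H) ≤ r}.Finite := fun r =>
    (hfin r).preimage Subtype.val_injective.injOn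
  have : Infinite H := H.infinite_of_finiteIndex
  obtain ⟨R, hR⟩ := exists_dist_coe_le_of_finiteIndex hinv H
  obtain ⟨c, K, hc, hgeod⟩ := hqi.coarselyGeodesic hmet
  exact ⟨hmetH, fun x y => hint x y, hinvH, hfinH,
    qiToCayley_of_coarselyGeodesic hmetH hinvH (hfinH _) (hgeod.comp hmet hc Subtype.val hR),
    unbounded_of_inBoundary_restrict hmet hfin hbdry H hR⟩

/-- The restriction of a Banach metric on `G` to a finite index
subgroup `H ≤ G` is a Banach metric on `H`. -/
theorem isBanachMetric_restrict_finiteIndex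
    {G : Type*} [Group G] [Group.FG G] [Infinite G]
    (H : Subgroup G) (hH : H.FiniteIndex)
    (d : G → G → ℝ) (hd : IsBanachMetric d) :
    IsBanachMetric (fun x y : H => d (x : G) (y : G)) :=
  isBanachMetric_restrict_finiteIndex_general H hH d hd
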